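/- arXiv:2209.12429 — 5 statements merged into one kernel-verified Lean document; each statement's English description precedes it below -/
import Mathlib

section
/- Let α be a type with decidable equality, n a natural number, and f : Finset α → ℝ a normalized, non-decreasing, submodular set function. Let a, b : Fin n → α be two sequences of actions, let A_0 = ∅ and A_i = A_{i-1} ∪ {a_i} for i = 1,…,n, and let B = {b_1,…,b_n}. Then f(B) ≤ f(A_n) + Σ_{i=1}^{n} f(b_i | A_{i-1}), i.e. the value of any action set B is bounded by the value of the sequentially built set A_n plus the sum of the marginal gains of the b_i's with respect to the prefixes A_{i-1}. -/
open Finset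

/-- For a normalized, non-decreasing, submodular set function `f`,
two action sequences `a b : Fin n → α`, prefix sets `A 0 = ∅`,
`A (i+1) = A i ∪ {a i}`, and `B = {b 0, …, b (n-1)}`, we have
`f B ≤ f (A n) + ∑ i, f(b i | A i)`. -/
theorem submodular_marginal_gain_bound
    {α : Type*} [DecidableEq α] (n : ℕ) (f : Finset α → ℝ)
    (hnorm : f ∅ = 0)
    (hmono : ∀ S T : Finset α, S ⊆ T → f S ≤ f T)
    (hsub : ∀ S T : Finset α, S ⊆ T → ∀ s : α,
      f (T ∪ {s}) - f T ≤ f (S ∪ {s}) - f S)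
    (a b : Fin n → α)
    (A : ℕ → Finset α)
    (hA0 : A 0 = ∅)
    (hAsucc : ∀ i : Fin n, A (i + 1) = A i ∪ {a i})
    (B : Finset α)
    (hB : B = Finset.image b Finset.univ) :
    f B ≤ f (A n) + ∑ i : Fin n, (f (A i ∪ {b i}) - f (A i)) := by
  -- monotonicity of the prefix sets
  have hmonoA : ∀ i j : ℕ, i ≤ j → j ≤ n → A i ⊆ A j := by
    intro i j hij hjn
    induction j with
    | zero =>
      have : i = 0 := Nat.le_zero.mp hij
      subst this; exact subset_rfl
    | succ k ih =>
      rcases Nat.lt_or_ge i (k + 1) with h | h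
      · have hk : k < n := lt_of_lt_of_le (Nat.lt_succ_self k) hjn
        have h1 : A k ⊆ A (k + 1) := by
          have hstep := hAsucc ⟨k, hk⟩
          simp only [Fin.val_mk] at hstep
          rw [hstep]; exact subset_union_left
        exact (ih (Nat.lt_succ_iff.mp h) (le_of_lt hk)).trans h1
      · have : i = k + 1 := le_antisymm hij h
        subst this; exact subset_rfl
  -- the auxiliary chain D i = A n ∪ {b 0, …, b (i-1)}
  set D : ℕ → Finset α :=
    fun i => A n ∪ (Finset.univ.filter (fun j : Fin n => (j : ℕ) < i)).image b with hD
  have hD0 : D 0 = A n := by simp [hD]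
  have hDn : B ⊆ D n := by
    rw [hB, hD]
    intro x hx
    simp only [mem_union, mem_image, mem_filter, mem_univ, true_and] at hx ⊢
    obtain ⟨j, hj⟩ := hx
    exact Or.inr ⟨j, j.isLt, hj⟩
  have hDsucc : ∀ i : Fin n, D ((i : ℕ) + 1) = D i ∪ {b i} := by
    intro i
    have hfil : (Finset.univ.filter (fun j : Fin n => (j : ℕ) < (i : ℕ) + 1))
        = (Finset.univ.filter (fun j : Fin n => (j : ℕ) < (i : ℕ))) ∪ {i} := by
      ext j
      simp only [mem_filter, mem_union, mem_singleton, mem_univ, true_and]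
      constructor
      · intro h
        rcases Nat.lt_or_ge (j : ℕ) (i : ℕ) with h' | h'
        · exact Or.inl h'
        · exact Or.inr (Fin.ext (by omega))
      · rintro (h | h)
        · exact Nat.lt_succ_of_lt h
        · subst h; exact Nat.lt_succ_self _
    simp only [hD, hfil, image_union, image_singleton, union_assoc]
  have hAD : ∀ i : Fin n, A i ⊆ D i := fun i =>
    (hmonoA i n (le_of_lt i.isLt) le_rfl).trans subset_union_left
  have key : ∀ i : Fin n, f (D ((i : ℕ) + 1)) - f (D i) ≤ f (A i ∪ {b i}) - f (A i) := by
    intro i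
    rw [hDsucc i]
    exact hsub (A i) (D i) (hAD i) (b i)
  have tel : ∑ i : Fin n, (f (D ((i : ℕ) + 1)) - f (D i)) = f (D n) - f (D 0) := by
    rw [Fin.sum_univ_eq_sum_range (fun i => f (D (i + 1)) - f (D i)) n,
      Finset.sum_range_sub (fun i => f (D i))]
  have hsum : f (D n) - f (A n) ≤ ∑ i : Fin n, (f (A i ∪ {b i}) - f (A i)) := by
    rw [← hD0, ← tel]
    exact Finset.sum_le_sum (fun i _ => key i)
  have h1 : f B ≤ f (D n) := hmono _ _ hDn
  linarith
end

section
/- Let α be a type with decidable equality, n a natural number, and f : Finset α → ℝ a normalized, non-decreasing, submodular set function. Let a, b : Fin n → α be two sequences of actions, let A_0 = ∅ and A_i = A_{i-1} ∪ {a_i} for i = 1,…,n, and let B = {b_1,…,b_n}. Then f(B) ≤ 2·f(A_n) + Σ_{i=1}^{n} [ f(b_i | A_{i-1}) − f(a_i | A_{i-1}) ], i.e. the suboptimality of the sequentially built set A_n relative to half the value of any set B is controlled by the per-agent gaps between the marginal gain of the comparator action b_i and the chosen action a_i with respect to the prefix A_{i-1}. -/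
open Finset

lemma marg_subadd {α : Type*} [DecidableEq α] (f : Finset α → ℝ)
    (hsub : ∀ S T : Finset α, S ⊆ T → ∀ s : α,
      f (T ∪ {s}) - f T ≤ f (S ∪ {s}) - f S)
    (S : Finset α) (T : Finset α) :
    f (S ∪ T) - f S ≤ ∑ t ∈ T, (f (S ∪ {t}) - f S) := by
  induction T using Finset.induction_on with
  | empty => simp
  | @insert t T ht ih =>
    rw [Finset.sum_insert ht]
    have h1 : f (S ∪ insert t T) - f (S ∪ T) ≤ f (S ∪ {t}) - f S := by
      have h := hsub S (S ∪ T) Finset.subset_union_left t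
      have he : S ∪ insert t T = (S ∪ T) ∪ {t} := by
        ext x; simp
      rw [he]; exact h
    linarith

lemma sum_image_le' {ι α : Type*} [DecidableEq ι] [DecidableEq α] (s : Finset ι) (b : ι → α)
    (g : α → ℝ) (hg : ∀ x, 0 ≤ g x) :
    ∑ t ∈ s.image b, g t ≤ ∑ i ∈ s, g (b i) := by
  induction s using Finset.induction_on with
  | empty => simp
  | @insert i s hi ih =>
    rw [Finset.image_insert, Finset.sum_insert hi]
    by_cases hb : b i ∈ s.image b
    · rw [Finset.insert_eq_self.mpr hb]
      linarith [hg (b i)]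
    · rw [Finset.sum_insert hb]; linarith

/-- For a normalized, non-decreasing, submodular `f`,
`f B ≤ 2·f(A n) + ∑ i [ f(b i | A i) − f(a i | A i) ]`. -/
theorem submodular_regret_decomposition
    {α : Type*} [DecidableEq α] (n : ℕ) (f : Finset α → ℝ)
    (hnorm : f ∅ = 0)
    (hmono : ∀ S T : Finset α, S ⊆ T → f S ≤ f T)
    (hsub : ∀ S T : Finset α, S ⊆ T → ∀ s : α,
      f (T ∪ {s}) - f T ≤ f (S ∪ {s}) - f S)
    (a b : Fin n → α)
    (A : ℕ → Finset α)
    (hA0 : A 0 = ∅)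
    (hAsucc : ∀ i : Fin n, A (i + 1) = A i ∪ {a i})
    (B : Finset α)
    (hB : B = Finset.image b Finset.univ) :
    f B ≤ 2 * f (A n) +
      ∑ i : Fin n, ((f (A i ∪ {b i}) - f (A i)) - (f (A i ∪ {a i}) - f (A i))) := by
  -- prefix chain
  have hchainAux : ∀ k i, i + k ≤ n → A i ⊆ A (i + k) := by
    intro k
    induction k with
    | zero => intro i _; simp
    | succ k ih =>
      intro i hik
      have h1 : A i ⊆ A (i + k) := ih i (by omega)
      have h2 : A (i + k) ⊆ A (i + k + 1) := by
        rw [hAsucc ⟨i + k, by omega⟩]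
        exact Finset.subset_union_left
      exact h1.trans (by rwa [show i + (k+1) = i + k + 1 from rfl])
  have hchain : ∀ i : Fin n, A i ⊆ A n := by
    intro i
    have := hchainAux (n - i) i (by omega)
    rwa [show (i : ℕ) + (n - i) = n by omega] at this
  -- step 1: f B ≤ f (A n) + ∑ marginal at A n
  have h1 : f B ≤ f (A n ∪ B) := hmono _ _ Finset.subset_union_right
  have h2 := marg_subadd f hsub (A n) B
  have h3 : ∑ t ∈ B, (f (A n ∪ {t}) - f (A n)) ≤
      ∑ i : Fin n, (f (A n ∪ {b i}) - f (A n)) := by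
    rw [hB]
    exact sum_image_le' _ _ _ (fun x => by
      have := hmono (A n) (A n ∪ {x}) Finset.subset_union_left; linarith)
  have h4 : ∑ i : Fin n, (f (A n ∪ {b i}) - f (A n)) ≤
      ∑ i : Fin n, (f (A i ∪ {b i}) - f (A i)) :=
    Finset.sum_le_sum (fun i _ => hsub (A i) (A n) (hchain i) (b i))
  -- telescoping
  have h5 : ∑ i : Fin n, (f (A (i + 1)) - f (A i)) = f (A n) := by
    rw [Fin.sum_univ_eq_sum_range (fun i => f (A (i + 1)) - f (A i)),
      Finset.sum_range_sub (fun i => f (A i)), hA0, hnorm, sub_zero]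
  have h6 : ∑ i : Fin n, (f (A i ∪ {a i}) - f (A i)) = f (A n) := by
    rw [← h5]
    exact Finset.sum_congr rfl (fun i _ => by rw [← hAsucc i])
  have h7 : ∑ i : Fin n, ((f (A i ∪ {b i}) - f (A i)) - (f (A i ∪ {a i}) - f (A i)))
      = ∑ i : Fin n, (f (A i ∪ {b i}) - f (A i)) - f (A n) := by
    rw [Finset.sum_sub_distrib, h6]
  linarith
end

section
/- (Sequential Greedy 1/2-approximation.) Let α be a type with decidable equality, n a natural number, and f : Finset α → ℝ a normalized, non-decreasing, submodular set function. For each i = 1,…,n let V_i be a finite set of available actions for agent i. Suppose a : Fin n → α is chosen greedily in sequence: a_i ∈ V_i and f(a_i | A_{i-1}) ≥ f(x | A_{i-1}) for every x ∈ V_i, where A_0 = ∅ and A_i = A_{i-1} ∪ {a_i}. Then for every comparator b : Fin n → α with b_i ∈ V_i for all i, and B = {b_1,…,b_n}, it holds that f(B) ≤ 2·f(A_n); in particular f(A_n) is at least half the optimal value of f over all action combinations in V_1 × ⋯ × V_n. -/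
open Finset

/-- Sequential Greedy 1/2-approximation: if each `a i` is a greedy
maximizer of the marginal gain over `V i` given the prefix `A i`, then for any
comparator `b` with `b i ∈ V i`, `f B ≤ 2·f(A n)`. -/
theorem sequential_greedy_half_approximation
    {α : Type*} [DecidableEq α] (n : ℕ) (f : Finset α → ℝ)
    (hnorm : f ∅ = 0)
    (hmono : ∀ S T : Finset α, S ⊆ T → f S ≤ f T)
    (hsub : ∀ S T : Finset α, S ⊆ T → ∀ s : α,
      f (T ∪ {s}) - f T ≤ f (S ∪ {s}) - f S)
    (V : Fin n → Finset α)
    (a : Fin n → α)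
    (A : ℕ → Finset α)
    (hA0 : A 0 = ∅)
    (hAsucc : ∀ i : Fin n, A (i + 1) = A i ∪ {a i})
    (ha_mem : ∀ i : Fin n, a i ∈ V i)
    (ha_greedy : ∀ i : Fin n, ∀ x ∈ V i,
      f (A i ∪ {x}) - f (A i) ≤ f (A i ∪ {a i}) - f (A i))
    (b : Fin n → α)
    (hb_mem : ∀ i : Fin n, b i ∈ V i)
    (B : Finset α)
    (hB : B = Finset.image b Finset.univ) :
    f B ≤ 2 * f (A n) := by
  -- A is monotone up to n
  have hstep : ∀ m : ℕ, m < n → A m ⊆ A (m + 1) := by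
    intro m hm
    have := hAsucc ⟨m, hm⟩
    simp only [Fin.val_mk] at this
    rw [this]
    exact subset_union_left
  have hmonoA : ∀ k : ℕ, k ≤ n → A k ⊆ A n := by
    intro k hk
    have : ∀ j : ℕ, k ≤ j → j ≤ n → A k ⊆ A j := by
      intro j
      induction j with
      | zero => intro h _; rw [Nat.le_zero.mp h]
      | succ m ih =>
        intro h1 h2
        rcases Nat.lt_succ_iff_lt_or_eq.mp (Nat.lt_succ_of_le h1) with h | h
        · exact (ih (by omega) (by omega)).trans (hstep m (by omega))
        · subst h; exact subset_rfl
    exact this n hk le_rfl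
  -- key induction
  have key : ∀ k : ℕ, k ≤ n →
      f (A n ∪ (Finset.univ.filter (fun i : Fin n => (i : ℕ) < k)).image b)
        ≤ f (A n) + (f (A k) - f (A 0)) := by
    intro k hk
    induction k with
    | zero => simp
    | succ m ih =>
      have hmn : m < n := hk
      have ihm := ih (le_of_lt hmn)
      set Bm := (Finset.univ.filter (fun i : Fin n => (i : ℕ) < m)).image b with hBm
      have hBstep : (Finset.univ.filter (fun i : Fin n => (i : ℕ) < m + 1)).image b
          = Bm ∪ {b ⟨m, hmn⟩} := by
        rw [hBm]
        ext x
        simp only [mem_image, mem_filter, mem_univ, true_and, mem_union, mem_singleton]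
        constructor
        · rintro ⟨i, hi, rfl⟩
          rcases Nat.lt_succ_iff_lt_or_eq.mp hi with h | h
          · exact Or.inl ⟨i, h, rfl⟩
          · right; congr 1; exact Fin.ext h
        · rintro (⟨i, hi, rfl⟩ | rfl)
          · exact ⟨i, by omega, rfl⟩
          · exact ⟨⟨m, hmn⟩, by simp, rfl⟩
      rw [hBstep, ← union_assoc]
      have h1 : f (A n ∪ Bm ∪ {b ⟨m, hmn⟩}) - f (A n ∪ Bm)
          ≤ f (A n ∪ {b ⟨m, hmn⟩}) - f (A n) :=
        hsub (A n) (A n ∪ Bm) subset_union_left _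
      have h2 : f (A n ∪ {b ⟨m, hmn⟩}) - f (A n)
          ≤ f (A m ∪ {b ⟨m, hmn⟩}) - f (A m) :=
        hsub (A m) (A n) (hmonoA m (le_of_lt hmn)) _
      have h3 : f (A m ∪ {b ⟨m, hmn⟩}) - f (A m)
          ≤ f (A m ∪ {a ⟨m, hmn⟩}) - f (A m) := by
        have := ha_greedy ⟨m, hmn⟩ (b ⟨m, hmn⟩) (hb_mem ⟨m, hmn⟩)
        simpa using this
      have h4 : A (m + 1) = A m ∪ {a ⟨m, hmn⟩} := by
        have := hAsucc ⟨m, hmn⟩; simpa using this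
      have : f (A n ∪ Bm ∪ {b ⟨m, hmn⟩}) - f (A n ∪ Bm)
          ≤ f (A (m + 1)) - f (A m) := by
        rw [h4]; linarith
      linarith
  have hfin := key n le_rfl
  have hBfull : (Finset.univ.filter (fun i : Fin n => (i : ℕ) < n)).image b
      = Finset.image b Finset.univ := by
    congr 1
    ext i
    simp [i.isLt]
  rw [hBfull, ← hB, hA0, hnorm] at hfin
  have hBsub : f B ≤ f (A n ∪ B) := hmono B (A n ∪ B) subset_union_right
  linarith
end

section
/- (Tracking-regret decomposition over T steps.) Let α be a type with decidable equality, n and T natural numbers, and for each t = 1,…,T let f_t : Finset α → ℝ be a normalized, non-decreasing, submodular set function. For each t let a_{·,t}, b_{·,t} : Fin n → α be the agents' actions and the comparator (optimal) actions at step t, with prefix sets A_{0,t} = ∅, A_{i,t} = A_{i-1,t} ∪ {a_{i,t}}, and B_t = {b_{1,t},…,b_{n,t}}. Then the 1/2-approximate tracking regret satisfies (1/2)·Σ_{t=1}^{T} f_t(B_t) − Σ_{t=1}^{T} f_t(A_{n,t}) ≤ (1/2)·Σ_{t=1}^{T} Σ_{i=1}^{n} [ f_t(b_{i,t} | A_{i-1,t})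 − f_t(a_{i,t} | A_{i-1,t}) ]. -/
open Finset

lemma tracking_aux {α : Type*} [DecidableEq α] {n : ℕ} (g : Finset α → ℝ)
    (hsub : ∀ S S' : Finset α, S ⊆ S' → ∀ s : α,
      g (S' ∪ {s}) - g S' ≤ g (S ∪ {s}) - g S)
    (A : ℕ → Finset α) (b : Fin n → α) (hAn : ∀ i : Fin n, A i ⊆ A n) :
    ∀ F : Finset (Fin n),
      g (A n ∪ Finset.image b F) - g (A n) ≤
        ∑ i ∈ F, (g (A i ∪ {b i}) - g (A i)) := by
  intro F
  induction F using Finset.induction_on with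
  | empty => simp
  | insert _ _ hj ih =>
    rename_i j F
    rw [Finset.image_insert, Finset.sum_insert hj]
    have heq : A n ∪ insert (b j) (Finset.image b F)
        = (A n ∪ Finset.image b F) ∪ {b j} := by
      rw [Finset.union_insert, Finset.insert_eq, Finset.union_comm]
    rw [heq]
    have h1 := hsub (A j) (A n ∪ Finset.image b F)
      ((hAn j).trans Finset.subset_union_left) (b j)
    linarith

/-- Tracking-regret decomposition over `T` steps: the
1/2-approximate tracking regret is bounded by half the sum over time and agents
of the marginal-gain gaps between the comparator and the chosen actions. -/
theorem tracking_regret_decomposition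
    {α : Type*} [DecidableEq α] (n T : ℕ)
    (f : Fin T → Finset α → ℝ)
    (hnorm : ∀ t : Fin T, f t ∅ = 0)
    (hmono : ∀ t : Fin T, ∀ S S' : Finset α, S ⊆ S' → f t S ≤ f t S')
    (hsub : ∀ t : Fin T, ∀ S S' : Finset α, S ⊆ S' → ∀ s : α,
      f t (S' ∪ {s}) - f t S' ≤ f t (S ∪ {s}) - f t S)
    (a b : Fin T → Fin n → α)
    (A : Fin T → ℕ → Finset α)
    (hA0 : ∀ t : Fin T, A t 0 = ∅)
    (hAsucc : ∀ t : Fin T, ∀ i : Fin n, A t (i + 1) = A t i ∪ {a t i})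
    (B : Fin T → Finset α)
    (hB : ∀ t : Fin T, B t = Finset.image (b t) Finset.univ) :
    (1 / 2) * ∑ t : Fin T, f t (B t) - ∑ t : Fin T, f t (A t n) ≤
      (1 / 2) * ∑ t : Fin T, ∑ i : Fin n,
        ((f t (A t i ∪ {b t i}) - f t (A t i)) -
          (f t (A t i ∪ {a t i}) - f t (A t i))) := by
  -- monotonicity of the prefix chain
  have hchain : ∀ t : Fin T, ∀ j : ℕ, j ≤ n → ∀ i : ℕ, i ≤ j → A t i ⊆ A t j := by
    intro t j
    induction j with
    | zero => intro _ i hi; rw [Nat.le_zero.mp hi]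
    | succ k ihk =>
      intro hk i hi
      rcases Nat.lt_or_ge i (k + 1) with h | h
      · have hsucc := hAsucc t ⟨k, by omega⟩
        simp only at hsucc
        exact (ihk (by omega) i (by omega)).trans
          (by rw [hsucc]; exact Finset.subset_union_left)
      · have : i = k + 1 := by omega
        subst this; exact Finset.Subset.refl _
  have hAn : ∀ t : Fin T, ∀ i : Fin n, A t i ⊆ A t n := fun t i =>
    hchain t n le_rfl i (le_of_lt i.isLt)
  -- key per-step bound
  have key : ∀ t : Fin T,
      f t (B t) - f t (A t n) ≤
        ∑ i : Fin n, (f t (A t i ∪ {b t i}) - f t (A t i)) := by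
    intro t
    have h1 := tracking_aux (f t) (hsub t) (A t) (b t) (hAn t) Finset.univ
    have h2 : f t (B t) ≤ f t (A t n ∪ Finset.image (b t) Finset.univ) := by
      rw [hB t]; exact hmono t _ _ Finset.subset_union_right
    linarith
  -- telescoping of the chosen-action gains
  have tel : ∀ t : Fin T,
      ∑ i : Fin n, (f t (A t i ∪ {a t i}) - f t (A t i)) = f t (A t n) := by
    intro t
    have : ∀ i : Fin n,
        f t (A t i ∪ {a t i}) - f t (A t i)
          = f t (A t ((i : ℕ) + 1)) - f t (A t i) := by
      intro i; rw [hAsucc t i]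
    rw [Finset.sum_congr rfl (fun i _ => this i),
      Fin.sum_univ_eq_sum_range (fun i => f t (A t (i + 1)) - f t (A t i)),
      Finset.sum_range_sub (fun i => f t (A t i)), hA0 t, hnorm t, sub_zero]
  have expand : ∀ t : Fin T,
      ∑ i : Fin n, ((f t (A t i ∪ {b t i}) - f t (A t i)) -
          (f t (A t i ∪ {a t i}) - f t (A t i)))
        = (∑ i : Fin n, (f t (A t i ∪ {b t i}) - f t (A t i))) - f t (A t n) := by
    intro t
    rw [Finset.sum_sub_distrib, tel t]
  rw [Finset.sum_congr rfl (fun t _ => expand t), Finset.sum_sub_distrib]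
  have hsum : ∑ t : Fin T, f t (B t) - ∑ t : Fin T, f t (A t n) ≤
      ∑ t : Fin T, ∑ i : Fin n, (f t (A t i ∪ {b t i}) - f t (A t i)) := by
    rw [← Finset.sum_sub_distrib]
    exact Finset.sum_le_sum fun t _ => key t
  linarith
end

section
/- (Deterministic form of the main theorem.) Let α be a type with decidable equality, n and T natural numbers with T ≥ 1, and for each t = 1,…,T let f_t : Finset α → ℝ be a normalized, non-decreasing, submodular set function. For each t let a_{·,t}, b_{·,t} : Fin n → α be actions with prefix sets A_{0,t} = ∅, A_{i,t} = A_{i-1,t} ∪ {a_{i,t}}, and B_t = {b_{1,t},…,b_{n,t}}. Suppose there exist real numbers Δ_1,…,Δ_n ≥ 0, L ≥ 0, L_1,…,L_n with 0 ≤ L_i ≤ L, and l ≥ 0 such that for every agent i: Σ_{t=1}^{T} [ f_t(b_{i,t} | A_{i-1,t}) − f_t(a_{i,t} | A_{i-1,t}) ] ≤ 8·√( T·((Δ_i + 1)·L_i + l) ). Then the 1/2-approximate tracking regret satisfies (1/2)·Σ_{t=1}^{T} f_t(B_t) − Σ_{t=1}^{T} f_t(A_{n,t}) ≤ 4·√(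 n·T·( (Σ_{i=1}^{n} Δ_i + n)·L + n·l ) ). -/
open Finset

/-- Deterministic form of the main theorem: if each agent's
cumulative marginal-gain gap is bounded by `8·√(T·((Δ i + 1)·L i + l))`, then
the 1/2-approximate tracking regret is bounded by
`4·√(n·T·((∑ Δ i + n)·L + n·l))`. -/
theorem tracking_regret_main_bound
    {α : Type*} [DecidableEq α] (n T : ℕ) (hT : 1 ≤ T)
    (f : Fin T → Finset α → ℝ)
    (hnorm : ∀ t : Fin T, f t ∅ = 0)
    (hmono : ∀ t : Fin T, ∀ S S' : Finset α, S ⊆ S' → f t S ≤ f t S')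
    (hsub : ∀ t : Fin T, ∀ S S' : Finset α, S ⊆ S' → ∀ s : α,
      f t (S' ∪ {s}) - f t S' ≤ f t (S ∪ {s}) - f t S)
    (a b : Fin T → Fin n → α)
    (A : Fin T → ℕ → Finset α)
    (hA0 : ∀ t : Fin T, A t 0 = ∅)
    (hAsucc : ∀ t : Fin T, ∀ i : Fin n, A t (i + 1) = A t i ∪ {a t i})
    (B : Fin T → Finset α)
    (hB : ∀ t : Fin T, B t = Finset.image (b t) Finset.univ)
    (Δ : Fin n → ℝ) (hΔ : ∀ i : Fin n, 0 ≤ Δ i)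
    (L : ℝ) (hL : 0 ≤ L)
    (Li : Fin n → ℝ) (hLi : ∀ i : Fin n, 0 ≤ Li i ∧ Li i ≤ L)
    (l : ℝ) (hl : 0 ≤ l)
    (hregret : ∀ i : Fin n,
      ∑ t : Fin T, ((f t (A t i ∪ {b t i}) - f t (A t i)) -
          (f t (A t i ∪ {a t i}) - f t (A t i))) ≤
        8 * Real.sqrt ((T : ℝ) * ((Δ i + 1) * Li i + l))) :
    (1 / 2) * ∑ t : Fin T, f t (B t) - ∑ t : Fin T, f t (A t n) ≤
      4 * Real.sqrt ((n : ℝ) * (T : ℝ) *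
        (((∑ i : Fin n, Δ i) + (n : ℝ)) * L + (n : ℝ) * l)) := by
  classical
  -- monotonicity of the prefix sets
  have hAmono : ∀ t : Fin T, ∀ j k : ℕ, j ≤ k → k ≤ n → A t j ⊆ A t k := by
    intro t j k hjk hkn
    induction k, hjk using Nat.le_induction with
    | base => exact Finset.Subset.refl _
    | succ k hk ih =>
      have hkn' : k < n := Nat.lt_of_succ_le hkn
      have h := hAsucc t ⟨k, hkn'⟩
      refine (ih (Nat.le_of_lt hkn')).trans ?_
      simp only [Fin.val_mk] at h
      rw [h]
      exact Finset.subset_union_left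
  -- key per-step inequality
  have key : ∀ t : Fin T, ∀ j : ℕ, j ≤ n →
      f t (A t n ∪ (Finset.univ.filter (fun i : Fin n => (i : ℕ) < j)).image (b t))
        ≤ f t (A t n) + ∑ i ∈ Finset.univ.filter (fun i : Fin n => (i : ℕ) < j),
            (f t (A t i ∪ {b t i}) - f t (A t i)) := by
    intro t j
    induction j with
    | zero => intro _; simp
    | succ j ih =>
      intro hjn
      have hjn' : j < n := Nat.lt_of_succ_le hjn
      have hfilter : Finset.univ.filter (fun i : Fin n => (i : ℕ) < j + 1)
          = insert (⟨j, hjn'⟩ : Fin n)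
              (Finset.univ.filter (fun i : Fin n => (i : ℕ) < j)) := by
        ext i
        simp [Nat.lt_succ_iff_lt_or_eq, Fin.ext_iff, or_comm]
        exact le_iff_eq_or_lt
      have hnotmem : (⟨j, hjn'⟩ : Fin n) ∉
          Finset.univ.filter (fun i : Fin n => (i : ℕ) < j) := by
        simp
      set S := A t n ∪ (Finset.univ.filter (fun i : Fin n => (i : ℕ) < j)).image (b t)
        with hS
      have himg : A t n ∪ (Finset.univ.filter
            (fun i : Fin n => (i : ℕ) < j + 1)).image (b t)
          = S ∪ {b t ⟨j, hjn'⟩} := by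
        rw [hfilter, Finset.image_insert, hS]
        ext x; simp [or_comm, or_assoc, or_left_comm]
      have hsubset : A t j ⊆ S := by
        exact (hAmono t j n (Nat.le_of_lt hjn') le_rfl).trans Finset.subset_union_left
      have hstep := hsub t (A t j) S hsubset (b t ⟨j, hjn'⟩)
      rw [himg, hfilter, Finset.sum_insert hnotmem]
      have := ih (Nat.le_of_lt hjn')
      simp only [Fin.val_mk]
      linarith [this, hstep]
  -- consequence: f t (B t) ≤ f t (A t n) + ∑ marginal gains of b
  have h1 : ∀ t : Fin T, f t (B t) ≤ f t (A t n) +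
      ∑ i : Fin n, (f t (A t i ∪ {b t i}) - f t (A t i)) := by
    intro t
    have hfull : Finset.univ.filter (fun i : Fin n => (i : ℕ) < n)
        = (Finset.univ : Finset (Fin n)) := by
      apply Finset.filter_true_of_mem
      intro i _; exact i.isLt
    have h0 := key t n le_rfl
    rw [hfull] at h0
    have hBsub : f t (B t) ≤ f t (A t n ∪ Finset.univ.image (b t)) := by
      apply hmono
      rw [hB t]
      exact Finset.subset_union_right
    exact hBsub.trans h0
  -- telescoping: ∑ marginal gains of a equals f t (A t n)
  have h2 : ∀ t : Fin T,
      ∑ i : Fin n, (f t (A t i ∪ {a t i}) - f t (A t i)) = f t (A t n) := by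
    intro t
    have : ∀ i : Fin n, f t (A t i ∪ {a t i}) - f t (A t i)
        = f t (A t ((i : ℕ) + 1)) - f t (A t i) := by
      intro i; rw [hAsucc t i]
    rw [Finset.sum_congr rfl (fun i _ => this i)]
    rw [Fin.sum_univ_eq_sum_range (fun j => f t (A t (j + 1)) - f t (A t j)) n]
    rw [Finset.sum_range_sub (fun j => f t (A t j)), hA0, hnorm, sub_zero]
  -- sum the regret bounds
  have h3 : ∑ t : Fin T, f t (B t) - 2 * ∑ t : Fin T, f t (A t n)
      ≤ 8 * ∑ i : Fin n, Real.sqrt ((T : ℝ) * ((Δ i + 1) * Li i + l)) := by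
    have hBsum : ∑ t : Fin T, f t (B t) ≤ ∑ t : Fin T, f t (A t n) +
        ∑ t : Fin T, ∑ i : Fin n, (f t (A t i ∪ {b t i}) - f t (A t i)) := by
      rw [← Finset.sum_add_distrib]
      exact Finset.sum_le_sum (fun t _ => h1 t)
    have hAsum : ∑ t : Fin T, f t (A t n)
        = ∑ t : Fin T, ∑ i : Fin n, (f t (A t i ∪ {a t i}) - f t (A t i)) := by
      exact (Finset.sum_congr rfl (fun t _ => (h2 t).symm))
    have hsw : ∑ t : Fin T, ∑ i : Fin n, (f t (A t i ∪ {b t i}) - f t (A t i))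
        - ∑ t : Fin T, ∑ i : Fin n, (f t (A t i ∪ {a t i}) - f t (A t i))
        ≤ 8 * ∑ i : Fin n, Real.sqrt ((T : ℝ) * ((Δ i + 1) * Li i + l)) := by
      rw [← Finset.sum_sub_distrib]
      simp_rw [← Finset.sum_sub_distrib]
      rw [Finset.sum_comm, Finset.mul_sum]
      exact Finset.sum_le_sum fun i _ => hregret i
    linarith
  -- Cauchy–Schwarz plus monotonicity of sqrt
  have h4 : ∑ i : Fin n, Real.sqrt ((T : ℝ) * ((Δ i + 1) * Li i + l))
      ≤ Real.sqrt ((n : ℝ) * (T : ℝ) *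
          (((∑ i : Fin n, Δ i) + (n : ℝ)) * L + (n : ℝ) * l)) := by
    have hx : ∀ i : Fin n, (0 : ℝ) ≤ (T : ℝ) * ((Δ i + 1) * Li i + l) := by
      intro i
      have h1 := (hLi i).1
      have h2 := hΔ i
      positivity
    have hrhs0 : (0 : ℝ) ≤ (n : ℝ) * (T : ℝ) *
        (((∑ i : Fin n, Δ i) + (n : ℝ)) * L + (n : ℝ) * l) := by
      have hs : (0 : ℝ) ≤ ∑ i : Fin n, Δ i := Finset.sum_nonneg fun i _ => hΔ i
      positivity
    have hlhs0 : (0 : ℝ) ≤ ∑ i : Fin n, Real.sqrt ((T : ℝ) * ((Δ i + 1) * Li i + l)) :=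
      Finset.sum_nonneg fun i _ => Real.sqrt_nonneg _
    apply Real.le_sqrt_of_sq_le
    calc (∑ i : Fin n, Real.sqrt ((T : ℝ) * ((Δ i + 1) * Li i + l))) ^ 2
        ≤ (Finset.univ : Finset (Fin n)).card *
            ∑ i : Fin n, Real.sqrt ((T : ℝ) * ((Δ i + 1) * Li i + l)) ^ 2 :=
          sq_sum_le_card_mul_sum_sq
      _ = (n : ℝ) * ∑ i : Fin n, ((T : ℝ) * ((Δ i + 1) * Li i + l)) := by
          rw [Finset.card_univ, Fintype.card_fin]
          congr 1
          exact Finset.sum_congr rfl fun i _ => Real.sq_sqrt (hx i)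
      _ ≤ (n : ℝ) * ((T : ℝ) * (((∑ i : Fin n, Δ i) + (n : ℝ)) * L + (n : ℝ) * l)) := by
          apply mul_le_mul_of_nonneg_left _ (by positivity)
          rw [← Finset.mul_sum]
          apply mul_le_mul_of_nonneg_left _ (by positivity)
          rw [Finset.sum_add_distrib, Finset.sum_const, Finset.card_univ,
            Fintype.card_fin, nsmul_eq_mul]
          have key2 : ∑ i : Fin n, (Δ i + 1) * Li i ≤ ((∑ i : Fin n, Δ i) + (n : ℝ)) * L := by
            calc ∑ i : Fin n, (Δ i + 1) * Li i ≤ ∑ i : Fin n, (Δ i + 1) * L := by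
                  apply Finset.sum_le_sum
                  intro i _
                  exact mul_le_mul_of_nonneg_left (hLi i).2 (by linarith [hΔ i])
              _ = ((∑ i : Fin n, Δ i) + (n : ℝ)) * L := by
                  rw [← Finset.sum_mul, Finset.sum_add_distrib, Finset.sum_const,
                    Finset.card_univ, Fintype.card_fin, nsmul_eq_mul, mul_one]
          linarith
      _ = (n : ℝ) * (T : ℝ) * (((∑ i : Fin n, Δ i) + (n : ℝ)) * L + (n : ℝ) * l) := by
          ring
  linarith
end
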